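/- Let σ > 0, E_m > 0, b ≥ 1 and ε ≥ 0 with 1 + ε ≤ b, let λ be a nonzero real number, and let g : ℝ → ℝ be integrable on the interval [1, b]. Let γ⁺ > 0 satisfy ∫_1^b |g(r)| dr ≤ γ⁺. Assume |λ|·γ⁺ / (2π·σ·E_m) ≥ 1 and ε/σ ≥ √(2·log(|λ|·γ⁺ / (2π·σ·E_m))). Then the complex number E = (λ/(2π·σ)) · ∫_{1+ε}^{b} g(r) · exp(−(r−1)²/(2σ²)) · exp(−2·i·arctan r) / (1 + r⁻²) dr satisfies |E| ≤ E_m. (Proposition 2: the truncation error of the skeletal density function, incurred by restricting the 1D affinity integral to the ε-approximate contact region, is bounded by E_m provided ε/σ exceeds the stated threshold.) -/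

import Mathlib

open MeasureTheory

theorem sdf_truncation_error_bound
    (σ Em b ε : ℝ) (hσ : 0 < σ) (hEm : 0 < Em) (hb : 1 ≤ b) (hε : 0 ≤ ε)
    (hεb : 1 + ε ≤ b) (lam : ℝ) (hlam : lam ≠ 0)
    (g : ℝ → ℝ) (hg : IntervalIntegrable g volume 1 b)
    (γp : ℝ) (hγp : 0 < γp)
    (hbound : (∫ r in (1 : ℝ)..b, |g r|) ≤ γp)
    (h1 : 1 ≤ |lam| * γp / (2 * Real.pi * σ * Em))
    (h2 : Real.sqrt (2 * Real.log (|lam| * γp / (2 * Real.pi * σ * Em))) ≤ ε / σ) :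
    ‖((lam / (2 * Real.pi * σ) : ℂ) *
      ∫ r in (1 + ε : ℝ)..b,
        (g r : ℂ) * Complex.exp (-(((r : ℂ) - 1) ^ 2) / (2 * (σ : ℂ) ^ 2)) *
          Complex.exp (-2 * Complex.I * (Real.arctan r : ℂ)) / (1 + ((r : ℂ))⁻¹ ^ 2))‖ ≤ Em := by
  have hπ : (0:ℝ) < 2 * Real.pi * σ := by positivity
  set K : ℝ := |lam| * γp / (2 * Real.pi * σ * Em) with hK
  have hK0 : 0 < K := lt_of_lt_of_le one_pos h1
  have hlogK : 0 ≤ Real.log K := Real.log_nonneg h1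
  have hsq : 2 * Real.log K ≤ (ε / σ) ^ 2 := by
    have h := Real.sq_sqrt (by linarith : (0:ℝ) ≤ 2 * Real.log K)
    nlinarith [Real.sqrt_nonneg (2 * Real.log K)]
  have hεσ : (ε / σ) ^ 2 = ε ^ 2 / σ ^ 2 := by field_simp
  set C : ℝ := Real.exp (-(ε ^ 2) / (2 * σ ^ 2)) with hCdef
  have hC0 : 0 < C := Real.exp_pos _
  have hC : C ≤ 1 / K := by
    have hhalf : ε ^ 2 / (2 * σ ^ 2) = (ε ^ 2 / σ ^ 2) / 2 := by ring
    have hlogle : Real.log K ≤ ε ^ 2 / (2 * σ ^ 2) := by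
      rw [hεσ] at hsq; rw [hhalf]; linarith
    have hstep : C ≤ Real.exp (-(Real.log K)) := by
      rw [hCdef, Real.exp_le_exp, neg_div]
      linarith
    rwa [Real.exp_neg, Real.exp_log hK0, ← one_div] at hstep
  -- integrability of |g| on subintervals
  have hsub1 : Set.uIcc (1:ℝ) (1+ε) ⊆ Set.uIcc (1:ℝ) b := by
    rw [Set.uIcc_of_le (by linarith), Set.uIcc_of_le (by linarith)]
    exact Set.Icc_subset_Icc le_rfl (by linarith)
  have hsub2 : Set.uIcc (1+ε:ℝ) b ⊆ Set.uIcc (1:ℝ) b := by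
    rw [Set.uIcc_of_le hεb, Set.uIcc_of_le (by linarith)]
    exact Set.Icc_subset_Icc (by linarith) le_rfl
  have hg1 : IntervalIntegrable (fun r => |g r|) volume 1 (1+ε) :=
    (hg.norm).mono_set hsub1
  have hg2 : IntervalIntegrable (fun r => |g r|) volume (1+ε) b :=
    (hg.norm).mono_set hsub2
  have hg2C : IntervalIntegrable (fun r => C * |g r|) volume (1+ε) b :=
    hg2.const_mul C
  -- pointwise bound
  have hptwise : ∀ r ∈ Set.uIoc (1+ε:ℝ) b,
      ‖(g r : ℂ) * Complex.exp (-(((r : ℂ) - 1) ^ 2) / (2 * (σ : ℂ) ^ 2)) *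
          Complex.exp (-2 * Complex.I * (Real.arctan r : ℂ)) / (1 + ((r : ℂ))⁻¹ ^ 2)‖ ≤
        C * |g r| := by
    intro r hr
    rw [Set.uIoc_of_le hεb] at hr
    obtain ⟨hr1, hr2⟩ := hr
    have hrpos : (0:ℝ) < r := by linarith
    have e1 : (-(((r : ℂ) - 1) ^ 2) / (2 * (σ : ℂ) ^ 2)) =
        ((-(r - 1) ^ 2 / (2 * σ ^ 2) : ℝ) : ℂ) := by push_cast; ring
    have e2 : (1 + ((r : ℂ))⁻¹ ^ 2) = ((1 + r⁻¹ ^ 2 : ℝ) : ℂ) := by push_cast; ring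
    have habs1 : ‖Complex.exp (-(((r : ℂ) - 1) ^ 2) / (2 * (σ : ℂ) ^ 2))‖ =
        Real.exp (-(r - 1) ^ 2 / (2 * σ ^ 2)) := by
      rw [e1, Complex.norm_exp_ofReal]
    have e3 : (-2 * Complex.I * (Real.arctan r : ℂ)) =
        ((-2 * Real.arctan r : ℝ) : ℂ) * Complex.I := by push_cast; ring
    have habs2 : ‖Complex.exp (-2 * Complex.I * (Real.arctan r : ℂ))‖ = 1 := by
      rw [e3, Complex.norm_exp_ofReal_mul_I]
    have habs3 : ‖(1 + ((r : ℂ))⁻¹ ^ 2)‖ = 1 + r⁻¹ ^ 2 := by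
      have hpos : (0:ℝ) ≤ 1 + r⁻¹ ^ 2 := by positivity
      rw [e2, Complex.norm_real, Real.norm_eq_abs, abs_of_nonneg hpos]
    rw [norm_div, norm_mul, norm_mul, habs1, habs2, habs3,
      Complex.norm_real, Real.norm_eq_abs, mul_one]
    have hden : (1:ℝ) ≤ 1 + r⁻¹ ^ 2 := le_add_of_nonneg_right (by positivity)
    have hexp : Real.exp (-(r - 1) ^ 2 / (2 * σ ^ 2)) ≤ C := by
      rw [hCdef, Real.exp_le_exp]
      have h1' : ε ≤ r - 1 := by linarith
      have hsq' : ε ^ 2 ≤ (r - 1) ^ 2 := by nlinarith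
      have h2σ : (0:ℝ) < 2 * σ ^ 2 := by positivity
      rw [div_le_div_iff₀ h2σ h2σ]
      nlinarith
    calc |g r| * Real.exp (-(r - 1) ^ 2 / (2 * σ ^ 2)) / (1 + r⁻¹ ^ 2)
        ≤ |g r| * Real.exp (-(r - 1) ^ 2 / (2 * σ ^ 2)) :=
          div_le_self (by positivity) hden
      _ ≤ |g r| * C := mul_le_mul_of_nonneg_left hexp (abs_nonneg _)
      _ = C * |g r| := by ring
  have hnorm : ‖∫ r in (1 + ε : ℝ)..b,
      (g r : ℂ) * Complex.exp (-(((r : ℂ) - 1) ^ 2) / (2 * (σ : ℂ) ^ 2)) *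
        Complex.exp (-2 * Complex.I * (Real.arctan r : ℂ)) / (1 + ((r : ℂ))⁻¹ ^ 2)‖ ≤
      abs (∫ r in (1 + ε : ℝ)..b, C * |g r|) := by
    apply intervalIntegral.norm_integral_le_abs_of_norm_le _ hg2C
    filter_upwards [ae_restrict_mem measurableSet_uIoc] with r hr
    exact hptwise r hr
  -- integral bound
  have hint2 : (∫ r in (1 + ε : ℝ)..b, |g r|) ≤ γp := by
    have hadd := intervalIntegral.integral_add_adjacent_intervals hg1 hg2
    have hnn : 0 ≤ ∫ r in (1:ℝ)..(1+ε), |g r| :=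
      intervalIntegral.integral_nonneg (by linarith) (fun x _ => abs_nonneg _)
    linarith [hadd, hbound]
  have hintnn : 0 ≤ ∫ r in (1 + ε : ℝ)..b, |g r| :=
    intervalIntegral.integral_nonneg hεb (fun x _ => abs_nonneg _)
  have hCint : abs (∫ r in (1 + ε : ℝ)..b, C * |g r|) ≤ C * γp := by
    rw [intervalIntegral.integral_const_mul, abs_of_nonneg (by positivity)]
    exact mul_le_mul_of_nonneg_left hint2 hC0.le
  -- assemble
  rw [norm_mul]
  have hcoef : ‖((lam / (2 * Real.pi * σ) : ℂ))‖ = |lam| / (2 * Real.pi * σ) := by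
    have h : ((lam / (2 * Real.pi * σ) : ℝ) : ℂ) = (lam / (2 * Real.pi * σ) : ℂ) := by
      push_cast; ring
    rw [← h, Complex.norm_real, Real.norm_eq_abs, abs_div, abs_of_pos hπ]
  rw [hcoef]
  have hIbound : ‖∫ r in (1 + ε : ℝ)..b,
      (g r : ℂ) * Complex.exp (-(((r : ℂ) - 1) ^ 2) / (2 * (σ : ℂ) ^ 2)) *
        Complex.exp (-2 * Complex.I * (Real.arctan r : ℂ)) / (1 + ((r : ℂ))⁻¹ ^ 2)‖ ≤ C * γp :=
    le_trans hnorm hCint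
  have hfinal : |lam| / (2 * Real.pi * σ) * (C * γp) ≤ Em := by
    have h1K : C * γp ≤ γp / K := by
      rw [div_eq_mul_inv, mul_comm γp]
      rw [one_div] at hC
      exact mul_le_mul_of_nonneg_right hC hγp.le
    have hKval : |lam| / (2 * Real.pi * σ) * (γp / K) = Em := by
      rw [hK]; field_simp
    calc |lam| / (2 * Real.pi * σ) * (C * γp)
        ≤ |lam| / (2 * Real.pi * σ) * (γp / K) :=
          mul_le_mul_of_nonneg_left h1K (by positivity)
      _ = Em := hKval
  calc |lam| / (2 * Real.pi * σ) * ‖∫ r in (1 + ε : ℝ)..b,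
        (g r : ℂ) * Complex.exp (-(((r : ℂ) - 1) ^ 2) / (2 * (σ : ℂ) ^ 2)) *
          Complex.exp (-2 * Complex.I * (Real.arctan r : ℂ)) / (1 + ((r : ℂ))⁻¹ ^ 2)‖
      ≤ |lam| / (2 * Real.pi * σ) * (C * γp) :=
        mul_le_mul_of_nonneg_left hIbound (by positivity)
    _ ≤ Em := hfinal
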